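/- arXiv:0904.0020 — 4 statements merged into one kernel-verified Lean document; each statement's English description precedes it below -/
import Mathlib

section
/- Let N ≥ 2, fix n ∈ {0, …, N−1}, and let β_0, …, β_N > 0. Let E = ({1, …, N−1} × {−1, +1}) ∪ {(0, +1), (N, −1)}, and for α = (i, σ) ∈ E set Δ_n(α) = 1 if (i, σ) = (n, +1), Δ_n(α) = −1 if (i, σ) = (n+1, −1), and Δ_n(α) = 0 otherwise. For λ ∈ (−β_n, β_{n+1}) and ε ≥ 0 define C_n(α, λ, ε) = β_i · ∫_0^∞ v · exp(−ε/v − (β_i + λ·Δ_n(α))·v²/2) dv and F_n(λ, ε) = ∏_{α ∈ E} C_n(α, λ, ε). Then the Gallavotti–Cohen symmetry F_n(λ, ε) = F_n(β_{n+1} − β_n − λ, ε) holds for all ε ≥ 0 and all λ such that both λ and β_{n+1} − β_n − λ lie in (−β_n, β_{n+1}). -/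
open MeasureTheory Finset

/-- Gallavotti–Cohen symmetry `F_n(λ, ε) = F_n(β_{n+1} − β_n − λ, ε)`
for the product `F_n(λ,ε) = ∏_{α ∈ E} C_n(α,λ,ε)` over the state space
`E = ({1,…,N−1} × {−1,+1}) ∪ {(0,+1),(N,−1)}`, where
`C_n((i,σ),λ,ε) = β_i ∫_0^∞ v exp(−ε/v − (β_i + λΔ_n(i,σ))v²/2) dv`. -/
theorem stmt_8 (N : ℕ) (hN : 2 ≤ N) (n : ℕ) (hn : n ≤ N - 1)
    (β : ℕ → ℝ) (hβ : ∀ i ≤ N, 0 < β i) :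
    let E : Finset (ℕ × ℤ) :=
      ((Finset.Icc 1 (N - 1)) ×ˢ ({-1, 1} : Finset ℤ)) ∪ {(0, 1), (N, -1)}
    let Δ : ℕ × ℤ → ℝ := fun α =>
      if α = (n, 1) then 1 else if α = (n + 1, -1) then -1 else 0
    let C : ℕ × ℤ → ℝ → ℝ → ℝ := fun α l ε =>
      β α.1 * ∫ v in Set.Ioi (0:ℝ),
        v * Real.exp (-ε / v - (β α.1 + l * Δ α) * v ^ 2 / 2)
    let F : ℝ → ℝ → ℝ := fun l ε => ∏ α ∈ E, C α l ε
    ∀ ε : ℝ, 0 ≤ ε → ∀ l : ℝ,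
      l ∈ Set.Ioo (-β n) (β (n + 1)) →
      β (n + 1) - β n - l ∈ Set.Ioo (-β n) (β (n + 1)) →
      F l ε = F (β (n + 1) - β n - l) ε := by
  intro E Δ C F ε hε l hl hl'
  set l' : ℝ := β (n + 1) - β n - l with hl'def
  -- membership of the two special states in E
  have hmem1 : ((n, 1) : ℕ × ℤ) ∈ E := by
    rcases Nat.eq_zero_or_pos n with h | h
    · subst h; simp [E]
    · simp only [E, Finset.mem_union, Finset.mem_product, Finset.mem_Icc,
        Finset.mem_insert, Finset.mem_singleton]
      refine Or.inl ⟨⟨h, hn⟩, ?_⟩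
      norm_num
  have hmem2 : ((n + 1, -1) : ℕ × ℤ) ∈ E := by
    by_cases h : n + 1 = N
    · simp only [E, Finset.mem_union, Finset.mem_insert, Finset.mem_singleton]
      exact Or.inr (Or.inr (by rw [h]))
    · simp only [E, Finset.mem_union, Finset.mem_product, Finset.mem_Icc,
        Finset.mem_insert, Finset.mem_singleton]
      refine Or.inl ⟨⟨by omega, by omega⟩, ?_⟩
      norm_num
  have hne : ((n, 1) : ℕ × ℤ) ≠ (n + 1, -1) := by
    intro h; exact absurd (congrArg Prod.fst h) (by simp)
  -- the involution swapping (n,1) and (n+1,-1)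
  set sw : ℕ × ℤ → ℕ × ℤ := fun α =>
    if α = (n, 1) then (n + 1, -1) else if α = (n + 1, -1) then (n, 1) else α
    with hsw
  have hswmem : ∀ a ∈ E, sw a ∈ E := by
    intro a ha
    by_cases h1 : a = (n, 1)
    · simpa [hsw, h1] using hmem2
    · by_cases h2 : a = (n + 1, -1)
      · simpa [hsw, h1, h2, hne] using hmem1
      · simpa [hsw, h1, h2] using ha
  have hswinv : ∀ a, sw (sw a) = a := by
    intro a
    by_cases h1 : a = (n, 1)
    · simp [hsw, h1, hne.symm, hne]
    · by_cases h2 : a = (n + 1, -1)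
      · simp [hsw, h1, h2, hne]
      · simp [hsw, h1, h2]
  -- pointwise values of Δ and sw
  have hD1 : Δ (n, 1) = 1 := if_pos rfl
  have hD2 : Δ (n + 1, -1) = -1 := by
    show (if ((n+1, -1) : ℕ × ℤ) = (n, 1) then (1:ℝ)
      else if ((n+1, -1) : ℕ × ℤ) = (n + 1, -1) then -1 else 0) = -1
    rw [if_neg (Ne.symm hne), if_pos rfl]
  have hs1 : sw (n, 1) = (n + 1, -1) := if_pos rfl
  have hs2 : sw (n + 1, -1) = (n, 1) := by
    show (if ((n+1, -1) : ℕ × ℤ) = (n, 1) then ((n+1, -1) : ℕ × ℤ)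
      else if ((n+1, -1) : ℕ × ℤ) = (n + 1, -1) then (n, 1) else (n+1, -1)) = (n, 1)
    rw [if_neg (Ne.symm hne), if_pos rfl]
  -- the coefficient identity under the swap
  have key : ∀ a ∈ E, β a.1 + l * Δ a = β (sw a).1 + l' * Δ (sw a) := by
    intro a _
    by_cases h1 : a = (n, 1)
    · subst h1
      rw [hs1, hD1, hD2]
      show β n + l * 1 = β (n + 1) + l' * (-1)
      rw [hl'def]; ring
    · by_cases h2 : a = (n + 1, -1)
      · subst h2
        rw [hs2, hD1, hD2]
        show β (n + 1) + l * (-1) = β n + l' * 1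
        rw [hl'def]; ring
      · have hswa : sw a = a := by
          show (if a = (n, 1) then ((n+1, -1) : ℕ × ℤ)
            else if a = (n + 1, -1) then (n, 1) else a) = a
          rw [if_neg h1, if_neg h2]
        have hDa : Δ a = 0 := by
          show (if a = (n, 1) then (1:ℝ) else if a = (n + 1, -1) then -1 else 0) = 0
          rw [if_neg h1, if_neg h2]
        rw [hswa, hDa]; ring
  -- split each factor into the prefactor and the integral
  have hsplit : ∀ m : ℝ, F m ε =
      (∏ α ∈ E, β α.1) * ∏ α ∈ E, ∫ v in Set.Ioi (0:ℝ),
        v * Real.exp (-ε / v - (β α.1 + m * Δ α) * v ^ 2 / 2) := by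
    intro m
    simp only [F, C]
    rw [Finset.prod_mul_distrib]
  rw [hsplit l, hsplit l']
  congr 1
  refine Finset.prod_nbij' sw sw hswmem hswmem (fun a _ => hswinv a)
    (fun a _ => hswinv a) (fun a ha => ?_)
  rw [key a ha]
end

section
/- Let T_L, T_R > 0 and define h : [0,1] → ℝ by h(x) = (T_L^{3/2} + x·(T_R^{3/2} − T_L^{3/2}))^{2/3}. Then: (a) h(0) = T_L, h(1) = T_R, h(x) > 0 for all x ∈ [0,1], h is differentiable on (0,1), and √(h(x))·h'(x) = (2/3)·(T_R^{3/2} − T_L^{3/2}) for all x ∈ (0,1); and (b) h is the unique such solution: if g : [0,1] → ℝ is continuous and positive, differentiable on (0,1), with x ↦ √(g(x))·g'(x) constant on (0,1), and g(0) = T_L, g(1) = T_R, then g = h. -/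
open Set

private lemma lin_pos17 {A B : ℝ} (hA : 0 < A) (hB : 0 < B) {x : ℝ}
    (hx : x ∈ Set.Icc (0:ℝ) 1) : 0 < A + x * (B - A) := by
  nlinarith [mul_nonneg hx.1 hB.le, mul_nonneg (sub_nonneg.2 hx.2) hA.le]

private lemma lin_hasDeriv17 (A B x : ℝ) :
    HasDerivAt (fun y : ℝ => A + y * (B - A)) (B - A) x := by
  simpa using ((hasDerivAt_id x).mul_const (B - A)).const_add A

private lemma h_hasDeriv17 {A B x : ℝ} (hw : 0 < A + x * (B - A)) :
    HasDerivAt (fun y : ℝ => (A + y * (B - A)) ^ ((2:ℝ)/3))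
      ((B - A) * ((2:ℝ)/3) * (A + x * (B - A)) ^ ((2:ℝ)/3 - 1)) x :=
  (lin_hasDeriv17 A B x).rpow_const (Or.inl hw.ne')

private lemma sqrt_mul_deriv17 {A B x : ℝ} (hw : 0 < A + x * (B - A)) :
    Real.sqrt ((A + x * (B - A)) ^ ((2:ℝ)/3)) *
      ((B - A) * ((2:ℝ)/3) * (A + x * (B - A)) ^ ((2:ℝ)/3 - 1)) = (2:ℝ)/3 * (B - A) := by
  set w := A + x * (B - A) with hwdef
  have hsqrt : Real.sqrt (w ^ ((2:ℝ)/3)) = w ^ ((1:ℝ)/3) := by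
    rw [Real.sqrt_eq_rpow, ← Real.rpow_mul hw.le]
    norm_num
  have e : (2:ℝ)/3 - 1 = -((1:ℝ)/3) := by norm_num
  have key : w ^ ((1:ℝ)/3) * w ^ (-((1:ℝ)/3)) = 1 := by
    rw [← Real.rpow_add hw]
    norm_num
  rw [hsqrt, e]
  linear_combination ((B - A) * ((2:ℝ)/3)) * key

private lemma uniq17 {A B : ℝ} (hA : 0 < A) (hB : 0 < B) (g : ℝ → ℝ)
    (hgc : ContinuousOn g (Set.Icc 0 1)) (hgpos : ∀ x ∈ Set.Icc (0:ℝ) 1, 0 < g x)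
    (hgd : DifferentiableOn ℝ g (Set.Ioo 0 1))
    (cst : ℝ) (hcst : ∀ x ∈ Set.Ioo (0:ℝ) 1, Real.sqrt (g x) * deriv g x = cst)
    (hg0 : g 0 ^ ((3:ℝ)/2) = A) (hg1 : g 1 ^ ((3:ℝ)/2) = B) :
    ∀ x ∈ Set.Icc (0:ℝ) 1, g x = (A + x * (B - A)) ^ ((2:ℝ)/3) := by
  set ψ : ℝ → ℝ := fun x => g x ^ ((3:ℝ)/2) - (A + x * (B - A)) with hψdef
  have hψc : ContinuousOn ψ (Set.Icc 0 1) := by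
    apply ContinuousOn.sub
    · exact hgc.rpow_const fun x hx => Or.inr (by norm_num)
    · exact Continuous.continuousOn (by continuity)
  have hψd : ∀ x ∈ Set.Ioo (0:ℝ) 1, HasDerivAt ψ ((3:ℝ)/2 * cst - (B - A)) x := by
    intro x hx
    have hgx : HasDerivAt g (deriv g x) x :=
      ((hgd x hx).differentiableAt (isOpen_Ioo.mem_nhds hx)).hasDerivAt
    have hpos := hgpos x (Set.Ioo_subset_Icc_self hx)
    have h1 : HasDerivAt (fun y => g y ^ ((3:ℝ)/2))
        (deriv g x * ((3:ℝ)/2) * g x ^ ((3:ℝ)/2 - 1)) x :=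
      hgx.rpow_const (Or.inl hpos.ne')
    have h2 : deriv g x * ((3:ℝ)/2) * g x ^ ((3:ℝ)/2 - 1) = (3:ℝ)/2 * cst := by
      have e : ((3:ℝ)/2 - 1) = (1:ℝ)/2 := by norm_num
      rw [e, ← Real.sqrt_eq_rpow, ← hcst x hx]
      ring
    exact (h2 ▸ h1).sub (lin_hasDeriv17 A B x)
  have hψ0 : ψ 0 = 0 := by simp [hψdef, hg0]
  have hψ1 : ψ 1 = 0 := by simp [hψdef, hg1]
  have h0mem : (0:ℝ) ∈ Set.Icc (0:ℝ) 1 := Set.left_mem_Icc.2 zero_le_one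
  have h1mem : (1:ℝ) ∈ Set.Icc (0:ℝ) 1 := Set.right_mem_Icc.2 zero_le_one
  have hc0 : (3:ℝ)/2 * cst - (B - A) = 0 := by
    by_contra hc
    rcases lt_or_gt_of_ne hc with hneg | hpos
    · have hanti : StrictAntiOn ψ (Set.Icc 0 1) :=
        strictAntiOn_of_deriv_neg (convex_Icc 0 1) hψc (fun x hx => by
          rw [interior_Icc] at hx; rw [(hψd x hx).deriv]; exact hneg)
      have := hanti h0mem h1mem zero_lt_one
      rw [hψ0, hψ1] at this; exact lt_irrefl _ this
    · have hmono : StrictMonoOn ψ (Set.Icc 0 1) :=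
        strictMonoOn_of_deriv_pos (convex_Icc 0 1) hψc (fun x hx => by
          rw [interior_Icc] at hx; rw [(hψd x hx).deriv]; exact hpos)
      have := hmono h0mem h1mem zero_lt_one
      rw [hψ0, hψ1] at this; exact lt_irrefl _ this
  have hdiff : DifferentiableOn ℝ ψ (interior (Set.Icc (0:ℝ) 1)) := by
    rw [interior_Icc]
    exact fun x hx => ((hψd x hx).differentiableAt).differentiableWithinAt
  have hmono : MonotoneOn ψ (Set.Icc 0 1) :=
    monotoneOn_of_deriv_nonneg (convex_Icc 0 1) hψc hdiff (fun x hx => by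
      rw [interior_Icc] at hx; rw [(hψd x hx).deriv, hc0])
  have hanti : AntitoneOn ψ (Set.Icc 0 1) :=
    antitoneOn_of_deriv_nonpos (convex_Icc 0 1) hψc hdiff (fun x hx => by
      rw [interior_Icc] at hx; rw [(hψd x hx).deriv, hc0])
  intro x hx
  have l1 : ψ x ≤ 0 := hψ1 ▸ hmono hx h1mem hx.2
  have l2 : 0 ≤ ψ x := hψ0 ▸ hmono h0mem hx hx.1
  have hψx : g x ^ ((3:ℝ)/2) = A + x * (B - A) := by
    have : ψ x = 0 := le_antisymm l1 l2
    simpa [hψdef, sub_eq_zero] using this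
  calc g x = (g x ^ ((3:ℝ)/2)) ^ ((2:ℝ)/3) := by
        rw [← Real.rpow_mul (hgpos x hx).le]; norm_num
    _ = (A + x * (B - A)) ^ ((2:ℝ)/3) := by rw [hψx]

/-- `h(x) = (T_L^{3/2} + x(T_R^{3/2}−T_L^{3/2}))^{2/3}` satisfies
`h(0)=T_L`, `h(1)=T_R`, is positive on `[0,1]`, differentiable on `(0,1)` with
`√(h x)·h'(x) = (2/3)(T_R^{3/2}−T_L^{3/2})`, and it is the unique such solution
of the boundary value problem `(h^{1/2} h')' = 0`, `h(0)=T_L`, `h(1)=T_R`. -/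
theorem stmt_17 (TL TR : ℝ) (hTL : 0 < TL) (hTR : 0 < TR) :
    let h : ℝ → ℝ := fun x =>
      (TL ^ ((3:ℝ)/2) + x * (TR ^ ((3:ℝ)/2) - TL ^ ((3:ℝ)/2))) ^ ((2:ℝ)/3)
    (h 0 = TL ∧ h 1 = TR ∧ (∀ x ∈ Set.Icc (0:ℝ) 1, 0 < h x) ∧
      DifferentiableOn ℝ h (Set.Ioo 0 1) ∧
      (∀ x ∈ Set.Ioo (0:ℝ) 1,
        Real.sqrt (h x) * deriv h x = (2:ℝ)/3 * (TR ^ ((3:ℝ)/2) - TL ^ ((3:ℝ)/2)))) ∧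
    (∀ g : ℝ → ℝ, ContinuousOn g (Set.Icc 0 1) → (∀ x ∈ Set.Icc (0:ℝ) 1, 0 < g x) →
      DifferentiableOn ℝ g (Set.Ioo 0 1) →
      (∃ cst : ℝ, ∀ x ∈ Set.Ioo (0:ℝ) 1, Real.sqrt (g x) * deriv g x = cst) →
      g 0 = TL → g 1 = TR → ∀ x ∈ Set.Icc (0:ℝ) 1, g x = h x) := by
  intro h
  have hA : 0 < TL ^ ((3:ℝ)/2) := Real.rpow_pos_of_pos hTL _
  have hB : 0 < TR ^ ((3:ℝ)/2) := Real.rpow_pos_of_pos hTR _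
  constructor
  · refine ⟨?_, ?_, ?_, ?_, ?_⟩
    · show (TL ^ ((3:ℝ)/2) + 0 * (TR ^ ((3:ℝ)/2) - TL ^ ((3:ℝ)/2))) ^ ((2:ℝ)/3) = TL
      rw [zero_mul, add_zero, ← Real.rpow_mul hTL.le]; norm_num
    · show (TL ^ ((3:ℝ)/2) + 1 * (TR ^ ((3:ℝ)/2) - TL ^ ((3:ℝ)/2))) ^ ((2:ℝ)/3) = TR
      rw [show TL ^ ((3:ℝ)/2) + 1 * (TR ^ ((3:ℝ)/2) - TL ^ ((3:ℝ)/2)) = TR ^ ((3:ℝ)/2) by ring,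
        ← Real.rpow_mul hTR.le]; norm_num
    · intro x hx
      exact Real.rpow_pos_of_pos (lin_pos17 hA hB hx) _
    · intro x hx
      exact ((h_hasDeriv17 (lin_pos17 hA hB (Set.Ioo_subset_Icc_self hx))).differentiableAt).differentiableWithinAt
    · intro x hx
      have hw := lin_pos17 hA hB (Set.Ioo_subset_Icc_self hx)
      rw [(h_hasDeriv17 hw).deriv]
      exact sqrt_mul_deriv17 hw
  · rintro g hgc hgpos hgd ⟨cst, hcst⟩ hg0 hg1 x hx
    exact uniq17 hA hB g hgc hgpos hgd cst hcst (by rw [hg0]) (by rw [hg1]) x hx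
end

section
/- Let N ≥ 2 and T_L, T_R > 0. Call a family of positive reals (T_0, …, T_N) a confined self-consistent profile if (T_n − T_{n+1})/(T_n^{−1/2} + T_{n+1}^{−1/2}) + (T_n − T_{n−1})/(T_n^{−1/2} + T_{n−1}^{−1/2}) = 0 for all n = 1, …, N−1. Then: (a) a positive family (T_0, …, T_N) is a confined self-consistent profile if and only if the quantity J_n := (T_{n+1} − T_n)/(T_n^{−1/2} + T_{n+1}^{−1/2}) is independent of n ∈ {0, …, N−1}; (b) there exists exactly one confined self-consistent profile with T_0 = T_L and T_N = T_R; and (c) if T_L ≤ T_R, this profile is nondecreasing and concave, i.e. T_n ≤ T_{n+1} and T_{n+1} − T_n ≤ T_n − T_{n−1} for all admissible n. -/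
/-!
With `s_n = √T_n` the current between neighbours is `J_n = s_n s_{n+1} (s_{n+1} - s_n)`, and the
self-consistency equation at `n` says `J_{n-1} = J_n`. Since `T_{n+1} - T_n = J (T_n^{-1/2} +
T_{n+1}^{-1/2})`, the common current `J` has the sign of `T_N - T_0`; when `J ≥ 0` this makes the
profile nondecreasing, and concave because `T^{-1/2}` decreases.

By the symmetry `n ↦ N - n` we may assume `T_L ≤ T_R`, i.e. `J ≥ 0`. Then `s_{n+1}` is the unique
root `t ≥ s_n` of `s_n t (t - s_n) = J`, so the profile is determined by `s_0` and `J`, and its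
endpoint `s_N` is continuous and strictly increasing in `J`: comparing two profiles, the pair
`(s_n, J / s_n)` increases with `J` at every step. The intermediate value theorem and injectivity
give existence and uniqueness.
-/

open Set

noncomputable def current (x y : ℝ) : ℝ :=
  (y - x) / (x ^ (-(1:ℝ)/2) + y ^ (-(1:ℝ)/2))

lemma current_swap (x y : ℝ) : current y x = -current x y := by
  rw [current, current, add_comm, ← neg_div, neg_sub]

lemma rpow_neg_half_eq_inv_sqrt {x : ℝ} (hx : 0 < x) : x ^ (-(1:ℝ)/2) = (√x)⁻¹ := by
  rw [neg_div, Real.rpow_neg hx.le, ← Real.sqrt_eq_rpow]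

lemma current_eq_sqrt {x y : ℝ} (hx : 0 < x) (hy : 0 < y) :
    current x y = √x * √y * (√y - √x) := by
  have hx' : 0 < √x := Real.sqrt_pos.mpr hx
  have hy' : 0 < √y := Real.sqrt_pos.mpr hy
  rw [current, rpow_neg_half_eq_inv_sqrt hx, rpow_neg_half_eq_inv_sqrt hy,
    ← Real.sq_sqrt hx.le, ← Real.sq_sqrt hy.le, Real.sqrt_sq hx'.le, Real.sqrt_sq hy'.le]
  field_simp
  ring

lemma sub_eq_current_mul {x y J : ℝ} (h : current x y = J) (hx : 0 < x) (hy : 0 < y) :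
    y - x = J * (x ^ (-(1:ℝ)/2) + y ^ (-(1:ℝ)/2)) := by
  rw [← h, current, div_mul_cancel₀]
  positivity

lemma forall_eq_succ_iff_exists_forall_eq {α : Type*} (f : ℕ → α) (N : ℕ) :
    (∀ n, n + 1 < N → f n = f (n + 1)) ↔ ∃ c, ∀ n < N, f n = c := by
  refine ⟨fun h => ⟨f 0, fun n hn => ?_⟩,
    fun ⟨c, hc⟩ n hn => (hc n (by omega)).trans (hc _ hn).symm⟩
  induction n with
  | zero => rfl
  | succ n ih => exact (h n hn).symm.trans (ih (by omega))

def HasConstCurrent (N : ℕ) (T : ℕ → ℝ) : Prop :=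
  ∃ J, ∀ n < N, current (T n) (T (n + 1)) = J

lemma selfConsistent_term (T : ℕ → ℝ) (m : ℕ) :
    (T (m + 1) - T (m + 1 + 1)) / ((T (m + 1)) ^ (-(1:ℝ)/2) + (T (m + 1 + 1)) ^ (-(1:ℝ)/2)) +
      (T (m + 1) - T (m + 1 - 1)) / ((T (m + 1)) ^ (-(1:ℝ)/2) + (T (m + 1 - 1)) ^ (-(1:ℝ)/2)) =
    current (T m) (T (m + 1)) - current (T (m + 1)) (T (m + 1 + 1)) := by
  rw [Nat.add_sub_cancel, current, current]
  ring

lemma selfConsistent_iff_hasConstCurrent {N : ℕ} {T : ℕ → ℝ} :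
    (∀ n : ℕ, 1 ≤ n → n ≤ N - 1 →
      (T n - T (n + 1)) / ((T n) ^ (-(1:ℝ)/2) + (T (n + 1)) ^ (-(1:ℝ)/2)) +
      (T n - T (n - 1)) / ((T n) ^ (-(1:ℝ)/2) + (T (n - 1)) ^ (-(1:ℝ)/2)) = 0) ↔
    HasConstCurrent N T := by
  rw [HasConstCurrent, ← forall_eq_succ_iff_exists_forall_eq]
  constructor
  · intro h n hn
    have := h (n + 1) (by omega) (by omega)
    rw [selfConsistent_term] at this
    linarith
  · intro h n h1 h2
    obtain ⟨m, rfl⟩ := Nat.exists_eq_add_of_le' h1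
    rw [selfConsistent_term, h m (by omega), sub_self]

lemma HasConstCurrent.reflect {N : ℕ} {T : ℕ → ℝ} (h : HasConstCurrent N T) :
    HasConstCurrent N (fun n => T (N - n)) := by
  obtain ⟨J, hJ⟩ := h
  refine ⟨-J, fun n hn => ?_⟩
  have hN : N - n = N - (n + 1) + 1 := by omega
  show current (T (N - n)) (T (N - (n + 1))) = -J
  rw [hN, current_swap, hJ _ (by omega)]

lemma lt_and_mul_lt_of_mul_lt {σ s τ t : ℝ} (hσ : 0 < σ) (hσs : σ ≤ s) (hστ : σ ≤ τ) (hst : s ≤ t)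
    (h : τ * (τ - σ) < t * (t - s)) : τ < t ∧ σ * (τ - σ) < s * (t - s) := by
  constructor
  · by_contra! hle
    nlinarith
  · rcases lt_trichotomy (τ - σ) (t - s) with hd | hd | hd <;> nlinarith

noncomputable def sqrtStep (s J : ℝ) : ℝ := (s + √(s ^ 2 + 4 * J / s)) / 2

section SqrtStep

variable {s J : ℝ}

lemma le_sqrtStep (hs : 0 < s) (hJ : 0 ≤ J) : s ≤ sqrtStep s J := by
  have : s ≤ √(s ^ 2 + 4 * J / s) := Real.le_sqrt_of_sq_le (by
    have : 0 ≤ 4 * J / s := by positivity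
    linarith)
  rw [sqrtStep]
  linarith

lemma sqrtStep_pos (hs : 0 < s) (hJ : 0 ≤ J) : 0 < sqrtStep s J :=
  hs.trans_le (le_sqrtStep hs hJ)

lemma mul_sqrtStep_mul_sub (hs : 0 < s) (hJ : 0 ≤ J) :
    s * sqrtStep s J * (sqrtStep s J - s) = J := by
  have hsq : √(s ^ 2 + 4 * J / s) ^ 2 = s ^ 2 + 4 * J / s := Real.sq_sqrt (by positivity)
  have : s * (4 * J / s) = 4 * J := by field_simp
  rw [sqrtStep]
  linear_combination (s / 4) * hsq + this / 4

lemma eq_sqrtStep {t : ℝ} (hs : 0 < s) (ht : 0 < t) (hJ : 0 ≤ J) (h : s * t * (t - s) = J) :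
    t = sqrtStep s J := by
  have hg := mul_sqrtStep_mul_sub hs hJ
  have hge := le_sqrtStep hs hJ
  have hts : s ≤ t := by nlinarith [mul_pos hs ht]
  have hfac : (t - sqrtStep s J) * (s * (t + sqrtStep s J - s)) = 0 := by
    linear_combination h - hg
  have hne : s * (t + sqrtStep s J - s) ≠ 0 := (mul_pos hs (by linarith)).ne'
  linarith [(mul_eq_zero.mp hfac).resolve_right hne]

lemma sqrtStep_zero (hs : 0 ≤ s) : sqrtStep s 0 = s := by
  rw [sqrtStep, mul_zero, zero_div, add_zero, Real.sqrt_sq hs]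
  ring

end SqrtStep

lemma sqrtStep_lt_and_div_lt {σ s J' J : ℝ} (hσ : 0 < σ) (hσs : σ ≤ s) (hJ' : 0 ≤ J')
    (hJ : 0 ≤ J) (h : J' / σ < J / s) :
    sqrtStep σ J' < sqrtStep s J ∧ J' / sqrtStep σ J' < J / sqrtStep s J := by
  have hs : 0 < s := hσ.trans_le hσs
  set τ := sqrtStep σ J'
  set t := sqrtStep s J
  have hτ : σ * τ * (τ - σ) = J' := mul_sqrtStep_mul_sub hσ hJ'
  have ht : s * t * (t - s) = J := mul_sqrtStep_mul_sub hs hJ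
  have hτpos : 0 < τ := sqrtStep_pos hσ hJ'
  have htpos : 0 < t := sqrtStep_pos hs hJ
  -- `J / s` and `J / t` are the two products `t (t - s)` and `s (t - s)` of the step
  rw [← hτ, ← ht] at h ⊢
  field_simp
  field_simp at h
  exact lt_and_mul_lt_of_mul_lt hσ hσs (le_sqrtStep hσ hJ') (le_sqrtStep hs hJ) h

noncomputable def sqrtProfile (s₀ J : ℝ) : ℕ → ℝ
  | 0 => s₀
  | n + 1 => sqrtStep (sqrtProfile s₀ J n) J

section SqrtProfile

variable {s₀ J : ℝ}

lemma sqrtProfile_pos (hs₀ : 0 < s₀) (hJ : 0 ≤ J) (n : ℕ) : 0 < sqrtProfile s₀ J n := by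
  induction n with
  | zero => exact hs₀
  | succ n ih => exact sqrtStep_pos ih hJ

lemma monotone_sqrtProfile (hs₀ : 0 < s₀) (hJ : 0 ≤ J) : Monotone (sqrtProfile s₀ J) :=
  monotone_nat_of_le_succ fun n => le_sqrtStep (sqrtProfile_pos hs₀ hJ n) hJ

lemma sqrtProfile_zero (hs₀ : 0 < s₀) (n : ℕ) : sqrtProfile s₀ 0 n = s₀ := by
  induction n with
  | zero => rfl
  | succ n ih => rw [sqrtProfile, ih, sqrtStep_zero hs₀.le]

lemma continuousOn_sqrtProfile (hs₀ : 0 < s₀) (n : ℕ) :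
    ContinuousOn (fun J => sqrtProfile s₀ J n) (Ici 0) := by
  induction n with
  | zero => exact continuousOn_const
  | succ n ih =>
    have hne : ∀ J ∈ Ici (0 : ℝ), sqrtProfile s₀ J n ≠ 0 :=
      fun J hJ => (sqrtProfile_pos hs₀ hJ n).ne'
    have hquot : ContinuousOn (fun J => 4 * J / sqrtProfile s₀ J n) (Ici 0) :=
      (continuousOn_const.mul continuousOn_id).div ih hne
    exact (ih.add ((ih.pow 2).add hquot).sqrt).div_const 2

lemma strictMonoOn_sqrtProfile (hs₀ : 0 < s₀) (n : ℕ) :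
    StrictMonoOn (fun J => sqrtProfile s₀ J (n + 1)) (Ici 0) := by
  intro J' hJ' J hJ hlt
  have key : ∀ n, sqrtProfile s₀ J' n ≤ sqrtProfile s₀ J n ∧
      J' / sqrtProfile s₀ J' n < J / sqrtProfile s₀ J n := by
    intro n
    induction n with
    | zero => exact ⟨le_rfl, div_lt_div_of_pos_right hlt hs₀⟩
    | succ n ih =>
      have := sqrtStep_lt_and_div_lt (sqrtProfile_pos hs₀ hJ' n) ih.1 hJ' hJ ih.2
      exact ⟨this.1.le, this.2⟩
  obtain ⟨hle, hdiv⟩ := key n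
  exact (sqrtStep_lt_and_div_lt (sqrtProfile_pos hs₀ hJ' n) hle hJ' hJ hdiv).1

lemma exists_sqrtProfile_eq {r : ℝ} {N : ℕ} (hs₀ : 0 < s₀) (hr : s₀ ≤ r) (hN : 1 ≤ N) :
    ∃ J, 0 ≤ J ∧ sqrtProfile s₀ J N = r := by
  -- the current of a single step from `s₀` straight to `r`
  set Jmax := s₀ * r * (r - s₀)
  have hJmax : 0 ≤ Jmax := by have := hs₀.trans_le hr; positivity
  have hstep : sqrtProfile s₀ Jmax 1 = r := (eq_sqrtStep hs₀ (hs₀.trans_le hr) hJmax rfl).symm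
  have hmem : r ∈ Icc (sqrtProfile s₀ 0 N) (sqrtProfile s₀ Jmax N) :=
    ⟨(sqrtProfile_zero hs₀ N).trans_le hr, hstep ▸ monotone_sqrtProfile hs₀ hJmax hN⟩
  obtain ⟨J, hJ, hJr⟩ := intermediate_value_Icc hJmax
    ((continuousOn_sqrtProfile hs₀ N).mono Icc_subset_Ici_self) hmem
  exact ⟨J, hJ.1, hJr⟩

end SqrtProfile

section Profile

variable {N : ℕ} {T T' : ℕ → ℝ} {J : ℝ}

lemma current_nonneg_of_le (hN : 1 ≤ N) (hpos : ∀ n ≤ N, 0 < T n)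
    (hJ : ∀ n < N, current (T n) (T (n + 1)) = J) (hle : T 0 ≤ T N) : 0 ≤ J := by
  set D : ℕ → ℝ := fun n => T n ^ (-(1:ℝ)/2) + T (n + 1) ^ (-(1:ℝ)/2)
  have hDpos : ∀ n < N, 0 < D n := fun n hn => by
    have := hpos n hn.le
    have := hpos (n + 1) hn
    positivity
  have htele : T N - T 0 = J * ∑ n ∈ Finset.range N, D n := by
    rw [← Finset.sum_range_sub, Finset.mul_sum]
    refine Finset.sum_congr rfl fun n hn => ?_
    have hn := Finset.mem_range.mp hn
    exact sub_eq_current_mul (hJ n hn) (hpos n (by omega)) (hpos (n + 1) hn)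
  have hD : 0 < ∑ n ∈ Finset.range N, D n :=
    Finset.sum_pos (fun n hn => hDpos n (Finset.mem_range.mp hn))
      (Finset.nonempty_range_iff.mpr (by omega))
  exact (mul_nonneg_iff_of_pos_right hD).mp (htele ▸ sub_nonneg.mpr hle)

lemma le_succ_of_current_nonneg (hpos : ∀ n ≤ N, 0 < T n)
    (hJ : ∀ n < N, current (T n) (T (n + 1)) = J) (hJ0 : 0 ≤ J) {n : ℕ} (hn : n < N) :
    T n ≤ T (n + 1) := by
  have hT := hpos n hn.le
  have hT' := hpos (n + 1) hn
  have := sub_eq_current_mul (hJ n hn) hT hT'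
  nlinarith [show 0 < T n ^ (-(1:ℝ)/2) + T (n + 1) ^ (-(1:ℝ)/2) by positivity]

lemma succ_sub_le_sub_pred_of_current_nonneg (hpos : ∀ n ≤ N, 0 < T n)
    (hJ : ∀ n < N, current (T n) (T (n + 1)) = J) (hJ0 : 0 ≤ J) {n : ℕ} (hn : n + 1 < N) :
    T (n + 2) - T (n + 1) ≤ T (n + 1) - T n := by
  have hTn := hpos n (by omega)
  have hmono : T n ≤ T (n + 2) :=
    (le_succ_of_current_nonneg hpos hJ hJ0 (by omega)).trans
      (le_succ_of_current_nonneg hpos hJ hJ0 hn)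
  have hrpow : T (n + 2) ^ (-(1:ℝ)/2) ≤ T n ^ (-(1:ℝ)/2) :=
    Real.rpow_le_rpow_of_nonpos hTn hmono (by norm_num)
  rw [sub_eq_current_mul (hJ (n + 1) hn) (hpos _ (by omega)) (hpos _ (by omega)),
    sub_eq_current_mul (hJ n (by omega)) hTn (hpos _ (by omega))]
  nlinarith

lemma sqrt_eq_sqrtProfile (hpos : ∀ n ≤ N, 0 < T n)
    (hJ : ∀ n < N, current (T n) (T (n + 1)) = J) (hJ0 : 0 ≤ J) :
    ∀ n ≤ N, √(T n) = sqrtProfile √(T 0) J n := by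
  intro n
  induction n with
  | zero => exact fun _ => rfl
  | succ n ih =>
    intro hn
    have hTn := hpos n (by omega)
    have hTn' := hpos (n + 1) hn
    rw [sqrtProfile, ← ih (by omega)]
    exact eq_sqrtStep (Real.sqrt_pos.mpr hTn) (Real.sqrt_pos.mpr hTn') hJ0
      ((current_eq_sqrt hTn hTn').symm.trans (hJ n hn))

lemma exists_hasConstCurrent_of_le {TL TR : ℝ} (hN : 1 ≤ N) (hTL : 0 < TL) (hTR : 0 < TR)
    (hle : TL ≤ TR) :
    ∃ T : ℕ → ℝ, (∀ n ≤ N, 0 < T n) ∧ T 0 = TL ∧ T N = TR ∧ HasConstCurrent N T := by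
  have hs₀ : 0 < √TL := Real.sqrt_pos.mpr hTL
  obtain ⟨J, hJ, hJN⟩ := exists_sqrtProfile_eq hs₀ (Real.sqrt_le_sqrt hle) hN
  have hpos : ∀ n, 0 < sqrtProfile √TL J n := sqrtProfile_pos hs₀ hJ
  refine ⟨fun n => sqrtProfile √TL J n ^ 2, fun n _ => pow_pos (hpos n) 2,
    Real.sq_sqrt hTL.le, by simp only [hJN, Real.sq_sqrt hTR.le], J, fun n _ => ?_⟩
  rw [current_eq_sqrt (pow_pos (hpos n) 2) (pow_pos (hpos (n + 1)) 2),
    Real.sqrt_sq (hpos n).le, Real.sqrt_sq (hpos (n + 1)).le]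
  exact mul_sqrtStep_mul_sub (hpos n) hJ

lemma eq_of_hasConstCurrent_of_le (hN : 1 ≤ N) (hpos : ∀ n ≤ N, 0 < T n)
    (hpos' : ∀ n ≤ N, 0 < T' n) (h0 : T 0 = T' 0) (hN' : T N = T' N) (hle : T 0 ≤ T N)
    (hT : HasConstCurrent N T) (hT' : HasConstCurrent N T') : ∀ n ≤ N, T n = T' n := by
  obtain ⟨J, hJ⟩ := hT
  obtain ⟨J', hJ'⟩ := hT'
  have hJ0 : 0 ≤ J := current_nonneg_of_le hN hpos hJ hle
  have hJ0' : 0 ≤ J' := current_nonneg_of_le hN hpos' hJ' (h0 ▸ hN' ▸ hle)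
  have hs := sqrt_eq_sqrtProfile hpos hJ hJ0
  have hs' := sqrt_eq_sqrtProfile hpos' hJ' hJ0'
  rw [← h0] at hs'
  obtain ⟨m, rfl⟩ := Nat.exists_eq_add_of_le' hN
  have hJJ : J = J' := (strictMonoOn_sqrtProfile (Real.sqrt_pos.mpr (hpos 0 (by omega))) m).injOn
    hJ0 hJ0' ((hs _ le_rfl).symm.trans (hN' ▸ hs' _ le_rfl))
  intro n hn
  rw [← Real.sqrt_inj (hpos n hn).le (hpos' n hn).le, hs n hn, hs' n hn, hJJ]

end Profile

lemma exists_hasConstCurrent {N : ℕ} {TL TR : ℝ} (hN : 1 ≤ N) (hTL : 0 < TL) (hTR : 0 < TR) :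
    ∃ T : ℕ → ℝ, (∀ n ≤ N, 0 < T n) ∧ T 0 = TL ∧ T N = TR ∧ HasConstCurrent N T := by
  rcases le_total TL TR with hle | hle
  · exact exists_hasConstCurrent_of_le hN hTL hTR hle
  · obtain ⟨T, hpos, h0, hN', hT⟩ := exists_hasConstCurrent_of_le hN hTR hTL hle
    refine ⟨fun n => T (N - n), fun n _ => hpos _ (by omega), ?_, ?_, hT.reflect⟩
    · simpa using hN'
    · simpa using h0

lemma eq_of_hasConstCurrent {N : ℕ} {T T' : ℕ → ℝ} (hN : 1 ≤ N) (hpos : ∀ n ≤ N, 0 < T n)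
    (hpos' : ∀ n ≤ N, 0 < T' n) (h0 : T 0 = T' 0) (hN' : T N = T' N)
    (hT : HasConstCurrent N T) (hT' : HasConstCurrent N T') : ∀ n ≤ N, T n = T' n := by
  rcases le_total (T 0) (T N) with hle | hle
  · exact eq_of_hasConstCurrent_of_le hN hpos hpos' h0 hN' hle hT hT'
  · have hrefl := eq_of_hasConstCurrent_of_le (T := fun n => T (N - n))
      (T' := fun n => T' (N - n)) hN (fun n _ => hpos _ (by omega))
      (fun n _ => hpos' _ (by omega)) (by simpa using hN') (by simpa using h0)
      (by simpa using hle) hT.reflect hT'.reflect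
    intro n hn
    simpa [Nat.sub_sub_self hn] using hrefl (N - n) (by omega)

/-- confined self-consistent profiles. (a) a positive family
`(T_0,…,T_N)` satisfies the confined self-consistency equations iff the discrete
current `J_n = (T_{n+1}−T_n)/(T_n^{−1/2}+T_{n+1}^{−1/2})` is independent of `n`;
(b) there is exactly one such profile with `T_0 = T_L`, `T_N = T_R`;
(c) if `T_L ≤ T_R` this profile is nondecreasing and concave. -/
theorem stmt_18 (N : ℕ) (hN : 2 ≤ N) (TL TR : ℝ) (hTL : 0 < TL) (hTR : 0 < TR) :
    let SC : (ℕ → ℝ) → Prop := fun T => ∀ n : ℕ, 1 ≤ n → n ≤ N - 1 →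
      (T n - T (n + 1)) / ((T n) ^ (-(1:ℝ)/2) + (T (n + 1)) ^ (-(1:ℝ)/2)) +
      (T n - T (n - 1)) / ((T n) ^ (-(1:ℝ)/2) + (T (n - 1)) ^ (-(1:ℝ)/2)) = 0
    -- (a)
    (∀ T : ℕ → ℝ, (∀ n ≤ N, 0 < T n) →
      (SC T ↔ ∃ J : ℝ, ∀ n < N,
        (T (n + 1) - T n) / ((T n) ^ (-(1:ℝ)/2) + (T (n + 1)) ^ (-(1:ℝ)/2)) = J)) ∧
    -- (b) existence
    (∃ T : ℕ → ℝ, (∀ n ≤ N, 0 < T n) ∧ T 0 = TL ∧ T N = TR ∧ SC T) ∧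
    -- (b) uniqueness
    (∀ T T' : ℕ → ℝ, (∀ n ≤ N, 0 < T n) → T 0 = TL → T N = TR → SC T →
      (∀ n ≤ N, 0 < T' n) → T' 0 = TL → T' N = TR → SC T' →
      ∀ n ≤ N, T n = T' n) ∧
    -- (c)
    (TL ≤ TR → ∀ T : ℕ → ℝ, (∀ n ≤ N, 0 < T n) → T 0 = TL → T N = TR → SC T →
      (∀ n < N, T n ≤ T (n + 1)) ∧
      (∀ n : ℕ, 1 ≤ n → n < N → T (n + 1) - T n ≤ T n - T (n - 1))) := by
  intro SC
  have hN1 : 1 ≤ N := by omega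
  have hSC : ∀ T, SC T ↔ HasConstCurrent N T := fun T => selfConsistent_iff_hasConstCurrent
  refine ⟨fun T _ => hSC T, ?_, ?_, ?_⟩
  · obtain ⟨T, hpos, h0, hN', hT⟩ := exists_hasConstCurrent hN1 hTL hTR
    exact ⟨T, hpos, h0, hN', (hSC T).2 hT⟩
  · intro T T' hpos h0 hN' hT hpos' h0' hN'' hT'
    exact eq_of_hasConstCurrent hN1 hpos hpos' (h0.trans h0'.symm) (hN'.trans hN''.symm)
      ((hSC T).1 hT) ((hSC T').1 hT')
  · intro hle T hpos h0 hN' hT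
    obtain ⟨J, hJ⟩ := (hSC T).1 hT
    have hJ0 : 0 ≤ J := current_nonneg_of_le hN1 hpos hJ (h0 ▸ hN' ▸ hle)
    refine ⟨fun n hn => le_succ_of_current_nonneg hpos hJ hJ0 hn, fun n h1 hn => ?_⟩
    obtain ⟨m, rfl⟩ := Nat.exists_eq_add_of_le' h1
    exact succ_sub_le_sub_pred_of_current_nonneg hpos hJ hJ0 hn
end

section
/- Let T_L, T_R > 0. For each integer N ≥ 2, let (T_0^{(N)}, …, T_N^{(N)}) be the unique family of positive reals with T_0^{(N)} = T_L, T_N^{(N)} = T_R satisfying the confined self-consistency equations (T_n − T_{n+1})/(T_n^{−1/2} + T_{n+1}^{−1/2}) + (T_n − T_{n−1})/(T_n^{−1/2} + T_{n−1}^{−1/2}) = 0 for all n = 1, …, N−1, and let h_N : [0,1] → ℝ be the piecewise-linear interpolation defined by h_N(x) = T_L + ∫_0^x g_N(t) dt, where g_N = ∑_{i=0}^{N−1} 1_{[i/N, (i+1)/N)} · N·(T_{i+1}^{(N)} − T_i^{(N)}), so that h_N(i/N) = T_i^{(N)}. Then h_N converges uniformly on [0,1] to the function h(x) = (T_L^{3/2}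 + x·(T_R^{3/2} − T_L^{3/2}))^{2/3}. -/
/-!
With `u n = √T n`, the self-consistency equation says that the flux
`c = u n * u (n+1) * (u (n+1) - u n)` does not depend on `n`; hence `u` is monotone and
`u (n+1) ^ 3 - u n ^ 3 = 3 c + (u (n+1) - u n) ^ 3`. Summing over the bonds gives
`3 N |c| ≤ |T_R^{3/2} - T_L^{3/2}|`, so all increments are `O(1/N)` and the cubes `T n ^ {3/2}`
stay within `O(1/N²)` of the chord `T_L^{3/2} + (n/N) (T_R^{3/2} - T_L^{3/2})`. Thus
`T n = h (n/N) + o(1)` uniformly in `n`, and since the interpolant at `x` is a convex combination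
of two neighbouring grid values, uniform continuity of `h` gives uniform convergence.
-/

open MeasureTheory Filter Set Topology

noncomputable def slopeStep (N : ℕ) (v : ℕ → ℝ) (t : ℝ) : ℝ :=
  ∑ i ∈ Finset.range N, Set.indicator (Set.Ico ((i : ℝ) / N) (((i : ℝ) + 1) / N))
    (fun _ => (N : ℝ) * (v (i + 1) - v i)) t

section Interpolation

variable {N : ℕ} {v : ℕ → ℝ}

lemma slopeStep_eq_of_mem {j : ℕ} {t : ℝ} (hj : j < N)
    (ht : t ∈ Ico ((j : ℝ) / N) ((j + 1) / N)) : slopeStep N v t = N * (v (j + 1) - v j) := by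
  have hN : (0 : ℝ) < N := Nat.cast_pos.2 (by omega)
  rw [slopeStep, Finset.sum_eq_single_of_mem j (Finset.mem_range.2 hj), indicator_of_mem ht]
  intro i _ hij
  refine indicator_of_notMem (fun hi => hij ?_) _
  have hij : (i : ℝ) < j + 1 := (div_lt_div_iff_of_pos_right hN).1 (hi.1.trans_lt ht.2)
  have hji : (j : ℝ) < i + 1 := (div_lt_div_iff_of_pos_right hN).1 (ht.1.trans_lt hi.2)
  norm_cast at hij hji
  omega

lemma integrable_slopeStep : Integrable (slopeStep N v) :=
  integrable_finsetSum _ fun _ _ =>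
    (integrable_indicator_iff measurableSet_Ico).2 (integrableOn_const measure_Ico_lt_top.ne)

lemma integral_slopeStep_of_le {j : ℕ} {y x : ℝ} (hj : j < N) (hy : (j : ℝ) / N ≤ y)
    (hyx : y ≤ x) (hx : x ≤ (j + 1) / N) :
    ∫ t in y..x, slopeStep N v t = N * (v (j + 1) - v j) * (x - y) := by
  rw [intervalIntegral.integral_of_le hyx, integral_Ioc_eq_integral_Ioo,
    setIntegral_congr_fun measurableSet_Ioo (g := fun _ => (N : ℝ) * (v (j + 1) - v j))
      fun t ht => slopeStep_eq_of_mem hj ⟨hy.trans ht.1.le, ht.2.trans_le hx⟩,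
    setIntegral_const, Real.volume_real_Ioo_of_le hyx, smul_eq_mul, mul_comm]

lemma integral_slopeStep_natCast_div {k : ℕ} (hk : k ≤ N) :
    ∫ t in (0 : ℝ)..k / N, slopeStep N v t = v k - v 0 := by
  induction k with
  | zero => simp
  | succ k ih =>
    have hN : (0 : ℝ) < N := Nat.cast_pos.2 (by omega)
    rw [← intervalIntegral.integral_add_adjacent_intervals (b := (k : ℝ) / N)
      integrable_slopeStep.intervalIntegrable integrable_slopeStep.intervalIntegrable,
      ih (by omega), integral_slopeStep_of_le (j := k) (by omega) le_rfl
        (by gcongr; linarith) (by push_cast; rfl)]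
    push_cast
    field_simp
    ring

lemma add_integral_slopeStep_eq {j : ℕ} {x : ℝ} (hj : j < N) (hjx : (j : ℝ) / N ≤ x)
    (hxj : x ≤ (j + 1) / N) :
    v 0 + ∫ t in (0 : ℝ)..x, slopeStep N v t = v j + N * (v (j + 1) - v j) * (x - j / N) := by
  rw [← intervalIntegral.integral_add_adjacent_intervals (b := (j : ℝ) / N)
    integrable_slopeStep.intervalIntegrable integrable_slopeStep.intervalIntegrable,
    integral_slopeStep_natCast_div hj.le, integral_slopeStep_of_le hj le_rfl hjx hxj]
  ring

lemma add_integral_slopeStep_mem_segment {j : ℕ} {x : ℝ} (hj : j < N)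
    (hjx : (j : ℝ) / N ≤ x) (hxj : x ≤ (j + 1) / N) :
    v 0 + ∫ t in (0 : ℝ)..x, slopeStep N v t ∈ segment ℝ (v j) (v (j + 1)) := by
  have hN : (0 : ℝ) < N := Nat.cast_pos.2 (by omega)
  have hθ : N * (x - j / N) = N * x - j := by field_simp
  rw [add_integral_slopeStep_eq hj hjx hxj]
  refine ⟨1 - N * (x - j / N), N * (x - j / N), ?_, ?_, by ring, by simp only [smul_eq_mul]; ring⟩
  · rw [hθ, sub_nonneg, sub_le_iff_le_add, ← le_div_iff₀' hN, add_comm]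
    exact hxj
  · rw [hθ, sub_nonneg, ← div_le_iff₀' hN]
    exact hjx

lemma exists_natCast_div_le_le {x : ℝ} (hN : 0 < N) (hx : x ∈ Icc (0 : ℝ) 1) :
    ∃ j < N, (j : ℝ) / N ≤ x ∧ x ≤ (j + 1) / N := by
  have hN' : (0 : ℝ) < N := Nat.cast_pos.2 hN
  rcases hx.2.eq_or_lt with rfl | hx1
  · refine ⟨N - 1, by omega, div_le_one_of_le₀ (Nat.cast_le.2 (Nat.sub_le N 1)) hN'.le, ?_⟩
    rw [Nat.cast_pred hN, sub_add_cancel, div_self hN'.ne']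
  · refine ⟨⌊N * x⌋₊, (Nat.floor_lt (mul_nonneg hN'.le hx.1)).2 (by nlinarith), ?_, ?_⟩
    · rw [div_le_iff₀ hN']
      linarith [Nat.floor_le (mul_nonneg hN'.le hx.1)]
    · rw [le_div_iff₀ hN', mul_comm]
      exact (Nat.lt_floor_add_one _).le

end Interpolation

theorem tendstoUniformlyOn_add_integral_slopeStep {f : ℝ → ℝ} (hf : ContinuousOn f (Icc 0 1))
    {v : ℕ → ℕ → ℝ} (hv : ∀ ε > 0, ∀ᶠ N in atTop, ∀ k ≤ N, |v N k - f (k / N)| < ε) :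
    TendstoUniformlyOn (fun N x => v N 0 + ∫ t in (0 : ℝ)..x, slopeStep N (v N) t) f atTop
      (Icc 0 1) := by
  rw [Metric.tendstoUniformlyOn_iff]
  intro ε hε
  obtain ⟨δ, hδ, hfδ⟩ := Metric.uniformContinuousOn_iff.1
    (isCompact_Icc.uniformContinuousOn_of_continuous hf) (ε / 2) (half_pos hε)
  filter_upwards [hv (ε / 2) (half_pos hε), eventually_gt_atTop 0,
    tendsto_one_div_atTop_nhds_zero_nat.eventually (gt_mem_nhds hδ)] with N hvN hN hNδ x hx
  obtain ⟨j, hj, hjx, hxj⟩ := exists_natCast_div_le_le hN hx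
  have hN' : (0 : ℝ) < N := Nat.cast_pos.2 hN
  have hnear : ∀ k ≤ N, (k : ℝ) / N - 1 / N ≤ x → x ≤ k / N + 1 / N →
      v N k ∈ Metric.ball (f x) ε := by
    intro k hk hkx hxk
    have hkI : (k : ℝ) / N ∈ Icc (0 : ℝ) 1 :=
      ⟨by positivity, div_le_one_of_le₀ (by exact_mod_cast hk) hN'.le⟩
    have hfk := hfδ x hx _ hkI (by rw [Real.dist_eq, abs_sub_lt_iff]; constructor <;> linarith)
    calc dist (v N k) (f x) ≤ dist (v N k) (f (k / N)) + dist (f (k / N)) (f x) :=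
          dist_triangle _ _ _
      _ < ε / 2 + ε / 2 := add_lt_add (hvN k hk) (by rwa [dist_comm])
      _ = ε := add_halves ε
  have hcell : (j : ℝ) / N + 1 / N = (j + 1) / N := by ring
  rw [dist_comm]
  refine (convex_ball (f x) ε).segment_subset (hnear j hj.le (by linarith) (by linarith))
    (hnear (j + 1) hj (by push_cast; linarith) (by push_cast; linarith))
    (add_integral_slopeStep_mem_segment hj hjx hxj)

def IsConfinedSelfConsistent (N : ℕ) (T : ℕ → ℝ) : Prop :=
  ∀ n : ℕ, 1 ≤ n → n ≤ N - 1 →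
    (T n - T (n + 1)) / ((T n) ^ (-(1:ℝ)/2) + (T (n + 1)) ^ (-(1:ℝ)/2)) +
      (T n - T (n - 1)) / ((T n) ^ (-(1:ℝ)/2) + (T (n - 1)) ^ (-(1:ℝ)/2)) = 0

lemma sub_div_rpow_neg_half_add_rpow_neg_half {a b : ℝ} (ha : 0 < a) (hb : 0 < b) :
    (a - b) / (a ^ (-(1:ℝ)/2) + b ^ (-(1:ℝ)/2)) = √a * √b * (√a - √b) := by
  have hinv : ∀ {x : ℝ}, 0 < x → x ^ (-(1:ℝ)/2) = (√x)⁻¹ := fun hx => by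
    rw [neg_div, Real.rpow_neg hx.le, ← Real.sqrt_eq_rpow]
  have ha' := Real.sqrt_pos.2 ha
  have hb' := Real.sqrt_pos.2 hb
  rw [hinv ha, hinv hb, div_eq_iff (by positivity)]
  field_simp
  linear_combination -Real.sq_sqrt ha.le + Real.sq_sqrt hb.le

lemma IsConfinedSelfConsistent.flux_eq {N : ℕ} {T : ℕ → ℝ} (hT : IsConfinedSelfConsistent N T)
    (hpos : ∀ n ≤ N, 0 < T n) :
    ∀ n < N, √(T n) * √(T (n + 1)) * (√(T (n + 1)) - √(T n)) =
      √(T 0) * √(T 1) * (√(T 1) - √(T 0)) := by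
  intro n hn
  induction n with
  | zero => rfl
  | succ n ih =>
    have h := hT (n + 1) (by omega) (by omega)
    rw [Nat.add_sub_cancel, sub_div_rpow_neg_half_add_rpow_neg_half (hpos _ (by omega))
      (hpos _ (by omega)), sub_div_rpow_neg_half_add_rpow_neg_half (hpos _ (by omega))
      (hpos _ (by omega))] at h
    linear_combination ih (by omega) - h

lemma abs_sub_chord_le {φ : ℕ → ℝ} {a ρ : ℝ} {N : ℕ}
    (h : ∀ n < N, |φ (n + 1) - φ n - a| ≤ ρ) {k : ℕ} (hk : k ≤ N) :
    |φ k - (φ 0 + k / N * (φ N - φ 0))| ≤ 2 * N * ρ := by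
  obtain rfl | hN := N.eq_zero_or_pos
  · obtain rfl := Nat.le_zero.1 hk
    simp
  have hN' : (0 : ℝ) < N := Nat.cast_pos.2 hN
  have hρ : 0 ≤ ρ := (abs_nonneg _).trans (h 0 hN)
  set S : ℕ → ℝ := fun k => φ k - φ 0 - k * a
  have hSle : ∀ k ≤ N, |S k| ≤ k * ρ := by
    intro k hk
    have hsum : S k = ∑ n ∈ Finset.range k, (φ (n + 1) - φ n - a) := by
      rw [Finset.sum_sub_distrib, Finset.sum_range_sub]
      simp [S]
    calc |S k| ≤ ∑ n ∈ Finset.range k, |φ (n + 1) - φ n - a| :=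
          hsum ▸ Finset.abs_sum_le_sum_abs _ _
      _ ≤ ∑ _n ∈ Finset.range k, ρ :=
          Finset.sum_le_sum fun n hn => h n ((Finset.mem_range.1 hn).trans_le hk)
      _ = k * ρ := by simp
  have hchord : φ k - (φ 0 + k / N * (φ N - φ 0)) = S k - k / N * S N := by
    simp only [S]
    field_simp
    ring
  have hkN : (k : ℝ) ≤ N := Nat.cast_le.2 hk
  rw [hchord]
  calc |S k - k / N * S N| ≤ |S k| + |k / N * S N| := abs_sub _ _
    _ = |S k| + k / N * |S N| := by rw [abs_mul, abs_div, Nat.abs_cast, Nat.abs_cast]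
    _ ≤ k * ρ + k / N * (N * ρ) := by gcongr; exacts [hSle k hk, hSle N le_rfl]
    _ = 2 * k * ρ := by field_simp; ring
    _ ≤ 2 * N * ρ := by gcongr

section Flux

variable {N : ℕ} {u : ℕ → ℝ} {c : ℝ}

lemma mem_uIcc_of_flux (hu : ∀ n ≤ N, 0 < u n)
    (hflux : ∀ n < N, u n * u (n + 1) * (u (n + 1) - u n) = c) {n : ℕ} (hn : n ≤ N) :
    u n ∈ uIcc (u 0) (u N) := by
  -- freezing `u` after `N` makes the step inequalities hold for every `n`
  let f : ℕ → ℝ := fun n => u (min n N)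
  have hstep : ∀ n, (0 ≤ c → f n ≤ f (n + 1)) ∧ (c ≤ 0 → f (n + 1) ≤ f n) := by
    intro n
    rcases lt_or_ge n N with h | h
    · simp only [f, min_eq_left h.le, min_eq_left (Nat.succ_le_of_lt h)]
      have := hflux n h
      have := mul_pos (hu n h.le) (hu (n + 1) h)
      constructor <;> intro hc <;> nlinarith
    · simp [f, min_eq_right h, min_eq_right (h.trans n.le_succ)]
  have h0 : f 0 = u 0 := by simp [f]
  have hn' : f n = u n := by simp [f, hn]
  have hN : f N = u N := by simp [f]
  rcases le_total 0 c with hc | hc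
  · have hf := monotone_nat_of_le_succ fun n => (hstep n).1 hc
    exact mem_uIcc_of_le (h0 ▸ hn' ▸ hf (Nat.zero_le n)) (hn' ▸ hN ▸ hf hn)
  · have hf := antitone_nat_of_succ_le fun n => (hstep n).2 hc
    exact mem_uIcc_of_ge (hn' ▸ hN ▸ hf hn) (h0 ▸ hn' ▸ hf (Nat.zero_le n))

lemma three_mul_abs_flux_le (hu : ∀ n ≤ N, 0 < u n)
    (hflux : ∀ n < N, u n * u (n + 1) * (u (n + 1) - u n) = c) :
    3 * N * |c| ≤ |u N ^ 3 - u 0 ^ 3| := by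
  have hstep : ∀ n < N, 3 * c ^ 2 ≤ c * (u (n + 1) ^ 3 - u n ^ 3) := by
    intro n hn
    have hpos := mul_pos (hu n hn.le) (hu (n + 1) hn)
    have hcube : c * (u (n + 1) ^ 3 - u n ^ 3) =
        3 * c ^ 2 + u n * u (n + 1) * (u (n + 1) - u n) ^ 4 := by
      rw [← hflux n hn]; ring
    rw [hcube]
    have := mul_nonneg hpos.le (by positivity : (0 : ℝ) ≤ (u (n + 1) - u n) ^ 4)
    linarith
  have hsum : 3 * N * c ^ 2 ≤ c * (u N ^ 3 - u 0 ^ 3) := by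
    rw [← Finset.sum_range_sub (fun n => u n ^ 3), Finset.mul_sum]
    calc 3 * N * c ^ 2 = ∑ _n ∈ Finset.range N, 3 * c ^ 2 := by simp; ring
      _ ≤ _ := Finset.sum_le_sum fun n hn => hstep n (Finset.mem_range.1 hn)
  rcases eq_or_ne c 0 with rfl | hc
  · simp
  refine le_of_mul_le_mul_right ?_ (abs_pos.2 hc)
  calc 3 * N * |c| * |c| = 3 * N * c ^ 2 := by rw [mul_assoc, abs_mul_abs_self, sq]
    _ ≤ |c * (u N ^ 3 - u 0 ^ 3)| := hsum.trans (le_abs_self _)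
    _ = |u N ^ 3 - u 0 ^ 3| * |c| := by rw [abs_mul, mul_comm]

lemma abs_cube_sub_chord_le (hN : 0 < N) (hu : ∀ n ≤ N, 0 < u n)
    (hflux : ∀ n < N, u n * u (n + 1) * (u (n + 1) - u n) = c) {k : ℕ} (hk : k ≤ N) :
    |u k ^ 3 - (u 0 ^ 3 + k / N * (u N ^ 3 - u 0 ^ 3))| ≤
      2 * |u N ^ 3 - u 0 ^ 3| ^ 3 / (27 * min (u 0) (u N) ^ 6) / N ^ 2 := by
  set m := min (u 0) (u N)
  have hm : 0 < m := lt_min (hu 0 (Nat.zero_le N)) (hu N le_rfl)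
  have hN' : (0 : ℝ) < N := Nat.cast_pos.2 hN
  set δ := |u N ^ 3 - u 0 ^ 3| / (3 * N * m ^ 2)
  have hΔ : ∀ n < N, |u (n + 1) - u n| ≤ δ := by
    intro n hn
    have hprod : m ^ 2 ≤ u n * u (n + 1) := by
      rw [sq]
      exact mul_le_mul (mem_uIcc_of_flux hu hflux hn.le).1 (mem_uIcc_of_flux hu hflux hn).1
        hm.le (hu n hn.le).le
    have habs : |u (n + 1) - u n| * (u n * u (n + 1)) = |c| := by
      rw [← hflux n hn, abs_mul, abs_of_pos (mul_pos (hu n hn.le) (hu (n + 1) hn))]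
      ring
    rw [le_div_iff₀ (by positivity)]
    calc |u (n + 1) - u n| * (3 * N * m ^ 2) = 3 * N * (|u (n + 1) - u n| * m ^ 2) := by ring
      _ ≤ 3 * N * |c| := by rw [← habs]; gcongr
      _ ≤ |u N ^ 3 - u 0 ^ 3| := three_mul_abs_flux_le hu hflux
  have hstep : ∀ n < N, |u (n + 1) ^ 3 - u n ^ 3 - 3 * c| ≤ δ ^ 3 := by
    intro n hn
    rw [← hflux n hn, show ∀ x y : ℝ, y ^ 3 - x ^ 3 - 3 * (x * y * (y - x)) = (y - x) ^ 3 by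
      intros; ring, abs_pow]
    exact pow_le_pow_left₀ (abs_nonneg _) (hΔ n hn) 3
  refine (abs_sub_chord_le (φ := fun n => u n ^ 3) hstep hk).trans_eq ?_
  simp only [δ]
  field_simp
  ring

end Flux

lemma eventually_abs_sub_lt_of_isConfinedSelfConsistent {TL TR : ℝ} (hTL : 0 < TL) (hTR : 0 < TR)
    {T : ℕ → ℕ → ℝ} (hpos : ∀ N, 2 ≤ N → ∀ n ≤ N, 0 < T N n)
    (hbc0 : ∀ N, 2 ≤ N → T N 0 = TL) (hbcN : ∀ N, 2 ≤ N → T N N = TR)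
    (hSC : ∀ N, 2 ≤ N → IsConfinedSelfConsistent N (T N)) {ε : ℝ} (hε : 0 < ε) :
    ∀ᶠ N in atTop, ∀ k ≤ N,
      |T N k - (TL ^ ((3:ℝ)/2) + k / N * (TR ^ ((3:ℝ)/2) - TL ^ ((3:ℝ)/2))) ^ ((2:ℝ)/3)| < ε := by
  have hcube : ∀ {x : ℝ}, 0 ≤ x → x ^ ((3:ℝ)/2) = √x ^ 3 := fun hx => by
    rw [Real.sqrt_eq_rpow, ← Real.rpow_natCast, ← Real.rpow_mul hx]; norm_num
  have hcube_rpow : ∀ {x : ℝ}, 0 ≤ x → (x ^ 3) ^ ((2:ℝ)/3) = x ^ 2 := fun hx => by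
    rw [← Real.rpow_natCast, ← Real.rpow_mul hx]; norm_num
  set L := TL ^ ((3:ℝ)/2)
  set R := TR ^ ((3:ℝ)/2)
  set K := 2 * |R - L| ^ 3 / (27 * min √TL √TR ^ 6)
  obtain ⟨δ, hδ, hF⟩ := Metric.uniformContinuousOn_iff.1
    ((isCompact_uIcc (a := L) (b := R)).uniformContinuousOn_of_continuous
      (Real.continuous_rpow_const (by norm_num : (0:ℝ) ≤ 2 / 3)).continuousOn) ε hε
  have hK : Tendsto (fun N : ℕ => K / (N : ℝ) ^ 2) atTop (𝓝 0) :=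
    tendsto_const_nhds.div_atTop
      ((tendsto_pow_atTop two_ne_zero).comp tendsto_natCast_atTop_atTop)
  filter_upwards [eventually_ge_atTop 2, hK.eventually (gt_mem_nhds hδ)] with N hN hKN k hk
  set u : ℕ → ℝ := fun n => √(T N n)
  have hu : ∀ n ≤ N, 0 < u n := fun n hn => Real.sqrt_pos.2 (hpos N hN n hn)
  have hflux := (hSC N hN).flux_eq (hpos N hN)
  have hu0 : u 0 = √TL := by simp [u, hbc0 N hN]
  have huN : u N = √TR := by simp [u, hbcN N hN]
  have hL : u 0 ^ 3 = L := by rw [hu0, ← hcube hTL.le]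
  have hR : u N ^ 3 = R := by rw [huN, ← hcube hTR.le]
  have hmem : u k ^ 3 ∈ uIcc L R := hL ▸ hR ▸
    (Odd.strictMono_pow (by decide)).monotone.mapsTo_uIcc (mem_uIcc_of_flux hu hflux hk)
  have hkN : (k : ℝ) / N ∈ Icc (0 : ℝ) 1 :=
    ⟨by positivity, div_le_one_of_le₀ (Nat.cast_le.2 hk) (by positivity)⟩
  have hchord : L + k / N * (R - L) ∈ uIcc L R :=
    (convex_uIcc L R).add_smul_sub_mem left_mem_uIcc right_mem_uIcc hkN
  have hclose : dist (u k ^ 3) (L + k / N * (R - L)) < δ := by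
    rw [Real.dist_eq, ← hL, ← hR]
    refine (abs_cube_sub_chord_le (by omega) hu hflux hk).trans_lt ?_
    rwa [hL, hR, hu0, huN]
  have := hF _ hmem _ hchord hclose
  rwa [Real.dist_eq, hcube_rpow (hu k hk).le, Real.sq_sqrt (hpos N hN k hk).le] at this

/-- if for each `N` the family `(T N 0, …, T N N)` is the (unique)
positive confined self-consistent profile with boundary values `T_L, T_R`, then
the piecewise-linear interpolations `h_N(x) = T_L + ∫_0^x g_N`, with `g_N` the
step function of slopes `N·(T_{i+1}−T_i)`, converge uniformly on `[0,1]` to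
`h(x) = (T_L^{3/2} + x(T_R^{3/2}−T_L^{3/2}))^{2/3}`. -/
theorem stmt_19 (TL TR : ℝ) (hTL : 0 < TL) (hTR : 0 < TR)
    (T : ℕ → ℕ → ℝ)
    (hpos : ∀ N, 2 ≤ N → ∀ n ≤ N, 0 < T N n)
    (hbc0 : ∀ N, 2 ≤ N → T N 0 = TL)
    (hbcN : ∀ N, 2 ≤ N → T N N = TR)
    (hSC : ∀ N, 2 ≤ N → ∀ n : ℕ, 1 ≤ n → n ≤ N - 1 →
      (T N n - T N (n + 1)) /
          ((T N n) ^ (-(1:ℝ)/2) + (T N (n + 1)) ^ (-(1:ℝ)/2)) +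
        (T N n - T N (n - 1)) /
          ((T N n) ^ (-(1:ℝ)/2) + (T N (n - 1)) ^ (-(1:ℝ)/2)) = 0) :
    let g : ℕ → ℝ → ℝ := fun N t => ∑ i ∈ Finset.range N,
      Set.indicator (Set.Ico ((i : ℝ) / N) (((i : ℝ) + 1) / N))
        (fun _ => (N : ℝ) * (T N (i + 1) - T N i)) t
    let hInterp : ℕ → ℝ → ℝ := fun N x => TL + ∫ t in (0:ℝ)..x, g N t
    let h : ℝ → ℝ := fun x =>
      (TL ^ ((3:ℝ)/2) + x * (TR ^ ((3:ℝ)/2) - TL ^ ((3:ℝ)/2))) ^ ((2:ℝ)/3)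
    TendstoUniformlyOn hInterp h atTop (Set.Icc 0 1) := by
  intro g hInterp h
  have hcont : ContinuousOn h (Icc 0 1) :=
    ((Real.continuous_rpow_const (by norm_num)).comp (by fun_prop)).continuousOn
  refine (tendstoUniformlyOn_add_integral_slopeStep hcont (v := T) fun ε hε =>
    eventually_abs_sub_lt_of_isConfinedSelfConsistent hTL hTR hpos hbc0 hbcN hSC hε).congr ?_
  filter_upwards [eventually_ge_atTop 2] with N hN x _
  simp only [hInterp, g, slopeStep, hbc0 N hN]
end
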